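/- Let R = F_{q^a}[X;σ] with a | n. If s is a total divisor of t in R, then gcrd(s, X^n − 1) is a total divisor of gcrd(t, X^n − 1). -/

import Mathlib

noncomputable section

variable {K : Type*} [Field K]

/-- The twisted shift operator `X` (sends `∑ aᵢ Yⁱ` to `∑ σ(aᵢ) Yⁱ⁺¹` on coefficient
sequences), realizing the indeterminate of the skew polynomial ring `K[X;σ]`. -/
def skewX (σ : K →+* K) : AddMonoid.End (ℕ → K) where
  toFun v n := if n = 0 then 0 else σ (v (n - 1))
  map_zero' := by funext n; simp
  map_add' v w := by
    funext n
    by_cases h : n = 0 <;> simp [h, Pi.add_apply]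

/-- Left multiplication by the constant `a`, realizing the embedding of `K`
into the skew polynomial ring `K[X;σ]`. -/
def skewC (a : K) : AddMonoid.End (ℕ → K) where
  toFun v n := a * v n
  map_zero' := by funext n; simp
  map_add' v w := by funext n; simp [Pi.add_apply, mul_add]

/-- The skew polynomial ring `K[X;σ]`, realized concretely as the subring of additive
endomorphisms of `ℕ → K` generated by the constants and the twisted shift. -/
def SkewPolyRing (σ : K →+* K) : Subring (AddMonoid.End (ℕ → K)) :=
  Subring.closure (Set.range skewC ∪ {skewX σ})

/-- The indeterminate `X` as an element of `K[X;σ]`. -/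
def Xel (σ : K →+* K) : SkewPolyRing σ :=
  ⟨skewX σ, Subring.subset_closure (Set.mem_union_right _ rfl)⟩

/-- The constant `a` as an element of `K[X;σ]`. -/
def Cel (σ : K →+* K) (a : K) : SkewPolyRing σ :=
  ⟨skewC a, Subring.subset_closure (Set.mem_union_left _ ⟨a, rfl⟩)⟩

/-- The `i`-th coefficient of a skew polynomial (read off by acting on the
delta sequence at `0`). -/
def coeffS (σ : K →+* K) (p : SkewPolyRing σ) (i : ℕ) : K :=
  (p : AddMonoid.End (ℕ → K)) (fun n => if n = 0 then 1 else 0) i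

/-- The degree of a skew polynomial. -/
def natDegS (σ : K →+* K) (p : SkewPolyRing σ) : ℕ :=
  sSup {i | coeffS σ p i ≠ 0}

/-- A skew polynomial is monic if its leading coefficient is `1`. -/
def MonicS (σ : K →+* K) (p : SkewPolyRing σ) : Prop :=
  coeffS σ p (natDegS σ p) = 1

/-- `s` left-divides `t`. -/
def LDvd (σ : K →+* K) (s t : SkewPolyRing σ) : Prop := ∃ u, t = s * u

/-- `s` right-divides `t`. -/
def RDvd (σ : K →+* K) (s t : SkewPolyRing σ) : Prop := ∃ u, t = u * s

/-- `s` is a total divisor of `t`: `s` left-divides `u*t` and right-divides `t*u`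
for every `u`. -/
def TotalDvd (σ : K →+* K) (s t : SkewPolyRing σ) : Prop :=
  ∀ u, LDvd σ s (u * t) ∧ RDvd σ s (t * u)

/-- `d` is the monic greatest common right divisor of `f` and `g`. -/
def IsGcrd (σ : K →+* K) (d f g : SkewPolyRing σ) : Prop :=
  MonicS σ d ∧ RDvd σ d f ∧ RDvd σ d g ∧ ∀ e, RDvd σ e f → RDvd σ e g → RDvd σ e d

/-- The two-sided ideal `RtR` generated by `t`, as an additive subgroup. -/
def TwoSidedGen (σ : K →+* K) (t : SkewPolyRing σ) : AddSubgroup (SkewPolyRing σ) :=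
  AddSubgroup.closure {x | ∃ r r', x = r * t * r'}

/-! Since `a ∣ n`, `σ ^ n = id`, so `N = X ^ n - 1` is central. Using division with remainder
on both sides (`σ` is onto), the monic element `C` of least degree of the two-sided ideal
`I = RtR + RNR` generates `I` both as a left and as a right ideal; in particular `C` is
invariant (`RC = CR`). As `C` right-divides `t` and `N`, it right-divides `gcrd(t, N)`, and an
invariant right divisor is a total divisor. Conversely `gcrd(s, N)` right-divides every element
of `I` (as `s ∣∣ t` and `N` is central), hence `C`; a right divisor of a nonzero invariant
element is also a left divisor of it, so `gcrd(s, N) ∣∣ gcrd(t, N)` through `C`. -/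

open Finset

namespace SkewPolyRing

variable {σ : K →+* K}

variable (σ) in
/-- `f` acts on coefficient sequences as the skew polynomial `∑ cᵢ Xⁱ` does. -/
def IsSkewPolyOperator (f : AddMonoid.End (ℕ → K)) : Prop :=
  ∃ c : ℕ → K, (∃ D, ∀ i, D < i → c i = 0) ∧
    ∀ v m, f v m = ∑ i ∈ range (m + 1), c i * (σ ^ i) (v (m - i))

theorem isSkewPolyOperator_of_single (k : ℕ) (a : K) {f : AddMonoid.End (ℕ → K)}
    (hf : ∀ v m, f v m = if k ≤ m then a * (σ ^ k) (v (m - k)) else 0) :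
    IsSkewPolyOperator σ f := by
  refine ⟨fun i => if i = k then a else 0, ⟨k, fun i hi => if_neg hi.ne'⟩, fun v m => ?_⟩
  simp only [hf, ite_mul, zero_mul, sum_ite_eq', mem_range, Nat.lt_succ_iff]

theorem isSkewPolyOperator_skewC (a : K) : IsSkewPolyOperator σ (skewC a) :=
  isSkewPolyOperator_of_single 0 a fun v m => by
    rw [if_pos m.zero_le, pow_zero, Nat.sub_zero]; rfl

theorem isSkewPolyOperator_skewX : IsSkewPolyOperator σ (skewX σ) :=
  isSkewPolyOperator_of_single 1 1 fun v m => by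
    show (if m = 0 then 0 else σ (v (m - 1))) = _
    rcases m with _ | m <;> simp

theorem isSkewPolyOperator_one : IsSkewPolyOperator σ 1 :=
  isSkewPolyOperator_of_single 0 1 fun v m => by simp

theorem isSkewPolyOperator_zero : IsSkewPolyOperator σ 0 :=
  ⟨0, ⟨0, fun _ _ => rfl⟩, fun v m => by simp⟩

theorem IsSkewPolyOperator.add {f g : AddMonoid.End (ℕ → K)} (hf : IsSkewPolyOperator σ f)
    (hg : IsSkewPolyOperator σ g) : IsSkewPolyOperator σ (f + g) := by
  obtain ⟨c, ⟨D, hc⟩, hf⟩ := hf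
  obtain ⟨d, ⟨E, hd⟩, hg⟩ := hg
  refine ⟨c + d, ⟨D + E, fun i hi => ?_⟩, fun v m => ?_⟩
  · simp [hc i (by omega), hd i (by omega)]
  · show f v m + g v m = _
    simp only [hf, hg, ← sum_add_distrib, Pi.add_apply, add_mul]

theorem IsSkewPolyOperator.neg {f : AddMonoid.End (ℕ → K)} (hf : IsSkewPolyOperator σ f) :
    IsSkewPolyOperator σ (-f) := by
  obtain ⟨c, ⟨D, hc⟩, hf⟩ := hf
  refine ⟨-c, ⟨D, fun i hi => by simp [hc i hi]⟩, fun v m => ?_⟩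
  show -(f v m) = _
  simp only [hf, ← sum_neg_distrib, Pi.neg_apply, neg_mul]

theorem IsSkewPolyOperator.mul {f g : AddMonoid.End (ℕ → K)} (hf : IsSkewPolyOperator σ f)
    (hg : IsSkewPolyOperator σ g) : IsSkewPolyOperator σ (f * g) := by
  obtain ⟨c, ⟨D, hc⟩, hf⟩ := hf
  obtain ⟨d, ⟨E, hd⟩, hg⟩ := hg
  refine ⟨fun k => ∑ i ∈ range (k + 1), c i * (σ ^ i) (d (k - i)),
    ⟨D + E, fun k hk => ?_⟩, fun v m => ?_⟩
  · refine sum_eq_zero fun i hi => ?_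
    rcases le_or_gt i D with h | h
    · rw [hd (k - i) (by omega), map_zero, mul_zero]
    · rw [hc i h, zero_mul]
  · have hterm : ∀ i ∈ range (m + 1), c i * (σ ^ i) (g v (m - i)) =
        ∑ j ∈ range (m + 1 - i), c i * (σ ^ i) (d j) * (σ ^ (i + j)) (v (m - i - j)) := by
      intro i hi
      rw [hg, map_sum, mul_sum, show m - i + 1 = m + 1 - i by simp at hi; omega]
      refine sum_congr rfl fun j _ => ?_
      rw [map_mul, ← mul_assoc, pow_add]; rfl
    rw [show (f * g) v m = f (g v) m from rfl, hf, sum_congr rfl hterm, ← sum_range_diag_flip]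
    refine sum_congr rfl fun k hk => ?_
    rw [sum_mul]
    refine sum_congr rfl fun i hi => ?_
    simp only [mem_range] at hk hi
    rw [Nat.add_sub_cancel' (by omega), Nat.sub_sub, Nat.add_sub_cancel' (by omega)]

theorem isSkewPolyOperator_coe (p : SkewPolyRing σ) :
    IsSkewPolyOperator σ (p : AddMonoid.End (ℕ → K)) := by
  refine Subring.closure_induction (fun f hf => ?_) isSkewPolyOperator_zero
    isSkewPolyOperator_one (fun _ _ _ _ => .add) (fun _ _ => .neg) (fun _ _ _ _ => .mul) p.2
  rcases hf with ⟨a, rfl⟩ | rfl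
  · exact isSkewPolyOperator_skewC a
  · exact isSkewPolyOperator_skewX

theorem coeffS_eq_of_forall_apply_eq (p : SkewPolyRing σ) {c : ℕ → K}
    (h : ∀ v m, (p : AddMonoid.End (ℕ → K)) v m =
      ∑ i ∈ range (m + 1), c i * (σ ^ i) (v (m - i)))
    (i : ℕ) : coeffS σ p i = c i := by
  rw [coeffS, h, sum_eq_single_of_mem i (self_mem_range_succ i)]
  · rw [Nat.sub_self, if_pos rfl, map_one, mul_one]
  · intro j hj hji
    rw [if_neg (by simp at hj; omega), map_zero, mul_zero]

theorem apply_eq_sum_coeffS (p : SkewPolyRing σ) (v : ℕ → K) (m : ℕ) :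
    (p : AddMonoid.End (ℕ → K)) v m =
      ∑ i ∈ range (m + 1), coeffS σ p i * (σ ^ i) (v (m - i)) := by
  obtain ⟨c, -, hc⟩ := isSkewPolyOperator_coe p
  simp only [hc, coeffS_eq_of_forall_apply_eq p hc]

theorem exists_coeffS_eq_zero_of_lt (p : SkewPolyRing σ) :
    ∃ D, ∀ i, D < i → coeffS σ p i = 0 := by
  obtain ⟨c, ⟨D, hD⟩, hc⟩ := isSkewPolyOperator_coe p
  exact ⟨D, fun i hi => (coeffS_eq_of_forall_apply_eq p hc i).trans (hD i hi)⟩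

theorem ext_coeffS {p q : SkewPolyRing σ} (h : ∀ i, coeffS σ p i = coeffS σ q i) : p = q := by
  refine Subtype.ext (AddMonoidHom.ext fun v => funext fun m => ?_)
  show (p : AddMonoid.End (ℕ → K)) v m = (q : AddMonoid.End (ℕ → K)) v m
  simp only [apply_eq_sum_coeffS, h]

@[simp] theorem coeffS_zero (i : ℕ) : coeffS σ 0 i = 0 := rfl

@[simp] theorem coeffS_one (i : ℕ) : coeffS σ 1 i = if i = 0 then 1 else 0 := rfl

@[simp] theorem coeffS_sub (p q : SkewPolyRing σ) (i : ℕ) :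
    coeffS σ (p - q) i = coeffS σ p i - coeffS σ q i := rfl

theorem coeffS_mul (p q : SkewPolyRing σ) (k : ℕ) :
    coeffS σ (p * q) k = ∑ i ∈ range (k + 1), coeffS σ p i * (σ ^ i) (coeffS σ q (k - i)) :=
  apply_eq_sum_coeffS p _ k

theorem coeffS_Cel_mul (a : K) (p : SkewPolyRing σ) (j : ℕ) :
    coeffS σ (Cel σ a * p) j = a * coeffS σ p j := rfl

theorem coeffS_Cel (a : K) (i : ℕ) : coeffS σ (Cel σ a) i = if i = 0 then a else 0 := by
  rw [← mul_one (Cel σ a), coeffS_Cel_mul, coeffS_one, mul_ite, mul_one, mul_zero]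

theorem coeffS_mul_Cel (p : SkewPolyRing σ) (a : K) (j : ℕ) :
    coeffS σ (p * Cel σ a) j = coeffS σ p j * (σ ^ j) a := by
  rw [coeffS_mul, sum_eq_single_of_mem j (self_mem_range_succ j)]
  · rw [Nat.sub_self, coeffS_Cel, if_pos rfl]
  · intro i hi hij
    rw [coeffS_Cel, if_neg (by simp at hi; omega), map_zero, mul_zero]

theorem skewX_pow_apply (k : ℕ) (v : ℕ → K) (m : ℕ) :
    (skewX σ ^ k) v m = if k ≤ m then (σ ^ k) (v (m - k)) else 0 := by
  induction k generalizing m with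
  | zero => simp
  | succ k ih =>
    rw [pow_succ', show (skewX σ * skewX σ ^ k) v m =
      if m = 0 then 0 else σ ((skewX σ ^ k) v (m - 1)) from rfl,
      ih, pow_succ', RingHom.coe_mul, Function.comp_apply]
    rcases m with _ | m
    · simp
    · by_cases hk : k ≤ m <;> simp [hk]

theorem coeffS_Xel_pow_mul (k : ℕ) (p : SkewPolyRing σ) (j : ℕ) :
    coeffS σ (Xel σ ^ k * p) j = if k ≤ j then (σ ^ k) (coeffS σ p (j - k)) else 0 :=
  skewX_pow_apply k _ j

theorem coeffS_Xel_pow (k j : ℕ) : coeffS σ (Xel σ ^ k) j = if j = k then 1 else 0 := by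
  rw [← mul_one (Xel σ ^ k), coeffS_Xel_pow_mul, coeffS_one]
  rcases lt_trichotomy j k with hjk | rfl | hjk
  · rw [if_neg (by omega), if_neg hjk.ne]
  · simp
  · rw [if_pos hjk.le, if_neg (by omega), if_neg hjk.ne', map_zero]

theorem coeffS_mul_Xel_pow (p : SkewPolyRing σ) (k j : ℕ) :
    coeffS σ (p * Xel σ ^ k) j = if k ≤ j then coeffS σ p (j - k) else 0 := by
  rw [coeffS_mul]
  split_ifs with hk
  · rw [sum_eq_single_of_mem (j - k) (mem_range.2 (by omega))]
    · rw [coeffS_Xel_pow, if_pos (by omega), map_one, mul_one]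
    · intro i hi hik
      rw [coeffS_Xel_pow, if_neg (by simp at hi; omega), map_zero, mul_zero]
  · refine sum_eq_zero fun i hi => ?_
    rw [coeffS_Xel_pow, if_neg (by omega), map_zero, mul_zero]

theorem bddAbove_coeffS_ne_zero (p : SkewPolyRing σ) : BddAbove {i | coeffS σ p i ≠ 0} := by
  obtain ⟨D, hD⟩ := exists_coeffS_eq_zero_of_lt p
  exact ⟨D, fun i hi => not_lt.1 fun h => hi (hD i h)⟩

theorem le_natDegS {p : SkewPolyRing σ} {i : ℕ} (h : coeffS σ p i ≠ 0) : i ≤ natDegS σ p :=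
  le_csSup (bddAbove_coeffS_ne_zero p) h

theorem coeffS_eq_zero_of_natDegS_lt {p : SkewPolyRing σ} {i : ℕ} (h : natDegS σ p < i) :
    coeffS σ p i = 0 :=
  not_not.1 fun hi => (le_natDegS hi).not_gt h

theorem coeffS_natDegS_ne_zero {p : SkewPolyRing σ} (hp : p ≠ 0) :
    coeffS σ p (natDegS σ p) ≠ 0 := by
  refine Nat.sSup_mem ?_ (bddAbove_coeffS_ne_zero p)
  by_contra! h
  exact hp (ext_coeffS fun i => by simpa using Set.eq_empty_iff_forall_notMem.1 h i)

theorem eq_zero_or_natDegS_lt {p : SkewPolyRing σ} {n : ℕ}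
    (h : ∀ j, n ≤ j → coeffS σ p j = 0) : p = 0 ∨ natDegS σ p < n := by
  by_cases hp : p = 0
  · exact .inl hp
  · exact .inr (not_le.1 fun hn => coeffS_natDegS_ne_zero hp (h _ hn))

theorem coeffS_mul_natDegS_add (p q : SkewPolyRing σ) :
    coeffS σ (p * q) (natDegS σ p + natDegS σ q) =
      coeffS σ p (natDegS σ p) * (σ ^ natDegS σ p) (coeffS σ q (natDegS σ q)) := by
  rw [coeffS_mul, sum_eq_single_of_mem (natDegS σ p) (mem_range.2 (by omega)),
    Nat.add_sub_cancel_left]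
  intro i _ hi
  rcases Nat.lt_or_gt_of_ne hi with hi | hi
  · rw [coeffS_eq_zero_of_natDegS_lt (p := q) (by omega), map_zero, mul_zero]
  · rw [coeffS_eq_zero_of_natDegS_lt hi, zero_mul]

instance : NoZeroDivisors (SkewPolyRing σ) where
  eq_zero_or_eq_zero_of_mul_eq_zero {p q} hpq := by
    by_contra! h
    have hlead := coeffS_mul_natDegS_add p q
    rw [hpq, coeffS_zero, eq_comm] at hlead
    exact mul_ne_zero (coeffS_natDegS_ne_zero h.1)
      ((map_ne_zero _).2 (coeffS_natDegS_ne_zero h.2)) hlead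

theorem MonicS.ne_zero {p : SkewPolyRing σ} (hp : MonicS σ p) : p ≠ 0 := by
  rintro rfl
  exact zero_ne_one hp

theorem natDegS_Cel_mul {a : K} (ha : a ≠ 0) (p : SkewPolyRing σ) :
    natDegS σ (Cel σ a * p) = natDegS σ p := by
  simp only [natDegS, coeffS_Cel_mul, ne_eq, mul_eq_zero, ha, false_or]

theorem monicS_Cel_inv_mul {p : SkewPolyRing σ} (hp : p ≠ 0) :
    MonicS σ (Cel σ (coeffS σ p (natDegS σ p))⁻¹ * p) := by
  have hlead := coeffS_natDegS_ne_zero hp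
  rw [MonicS, natDegS_Cel_mul (inv_ne_zero hlead), coeffS_Cel_mul, inv_mul_cancel₀ hlead]

theorem Xel_pow_mul_comm {n : ℕ} (hn : ∀ x, (σ ^ n) x = x) (p : SkewPolyRing σ) :
    Xel σ ^ n * p = p * Xel σ ^ n :=
  ext_coeffS fun j => by rw [coeffS_Xel_pow_mul, coeffS_mul_Xel_pow, hn]

theorem exists_coeffS_sub_mul_monicS_eq_zero {g f : SkewPolyRing σ} (hg : MonicS σ g)
    (hgf : natDegS σ g ≤ natDegS σ f) :
    ∃ q, ∀ j, natDegS σ f ≤ j → coeffS σ (f - q * g) j = 0 := by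
  refine ⟨Cel σ (coeffS σ f (natDegS σ f)) * Xel σ ^ (natDegS σ f - natDegS σ g),
    fun j hj => ?_⟩
  rw [coeffS_sub, mul_assoc, coeffS_Cel_mul, coeffS_Xel_pow_mul, if_pos (by omega)]
  rcases hj.lt_or_eq with hj | rfl
  · rw [coeffS_eq_zero_of_natDegS_lt hj, coeffS_eq_zero_of_natDegS_lt (p := g) (by omega),
      map_zero, mul_zero, sub_zero]
  · rw [Nat.sub_sub_self hgf, hg, map_one, mul_one, sub_self]

theorem exists_coeffS_sub_monicS_mul_eq_zero (hs : Function.Surjective σ)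
    {g f : SkewPolyRing σ} (hg : MonicS σ g) (hgf : natDegS σ g ≤ natDegS σ f) :
    ∃ q, ∀ j, natDegS σ f ≤ j → coeffS σ (f - g * q) j = 0 := by
  obtain ⟨b, hb⟩ := hs.iterate (natDegS σ g) (coeffS σ f (natDegS σ f))
  refine ⟨Cel σ b * Xel σ ^ (natDegS σ f - natDegS σ g), fun j hj => ?_⟩
  rw [coeffS_sub, ← mul_assoc, coeffS_mul_Xel_pow, if_pos (by omega), coeffS_mul_Cel]
  rcases hj.lt_or_eq with hj | rfl
  · rw [coeffS_eq_zero_of_natDegS_lt hj, coeffS_eq_zero_of_natDegS_lt (p := g) (by omega),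
      zero_mul, sub_zero]
  · rw [Nat.sub_sub_self hgf, hg, one_mul, RingHom.coe_pow, hb, sub_self]

/-- Division with remainder, for any additive subgroup `M` in which leading terms of degree
at least `d` can be cancelled. -/
theorem exists_sub_eq_zero_or_natDegS_lt (M : AddSubgroup (SkewPolyRing σ)) (d : ℕ)
    (hlead : ∀ f : SkewPolyRing σ, d ≤ natDegS σ f →
      ∃ m ∈ M, ∀ j, natDegS σ f ≤ j → coeffS σ (f - m) j = 0)
    (f : SkewPolyRing σ) : ∃ m ∈ M, f - m = 0 ∨ natDegS σ (f - m) < d := by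
  induction hn : natDegS σ f using Nat.strong_induction_on generalizing f with
  | _ n ih =>
  by_cases hfd : natDegS σ f < d
  · exact ⟨0, zero_mem M, .inr (by rwa [sub_zero])⟩
  obtain ⟨m, hm, hlow⟩ := hlead f (not_lt.1 hfd)
  rcases eq_zero_or_natDegS_lt (hn ▸ hlow) with hzero | hlt
  · exact ⟨m, hm, .inl hzero⟩
  · obtain ⟨m', hm', hrem⟩ := ih _ hlt (f - m) rfl
    exact ⟨m + m', add_mem hm hm', by rwa [← sub_sub]⟩

theorem mem_of_forall_le_natDegS (I : TwoSidedIdeal (SkewPolyRing σ)) {d : ℕ}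
    (hmin : ∀ x ∈ I, x ≠ 0 → d ≤ natDegS σ x) (M : AddSubgroup (SkewPolyRing σ))
    (hMI : ∀ m ∈ M, m ∈ I)
    (hlead : ∀ f : SkewPolyRing σ, d ≤ natDegS σ f →
      ∃ m ∈ M, ∀ j, natDegS σ f ≤ j → coeffS σ (f - m) j = 0)
    {x : SkewPolyRing σ} (hx : x ∈ I) : x ∈ M := by
  obtain ⟨m, hm, hzero | hlt⟩ := exists_sub_eq_zero_or_natDegS_lt M d hlead x
  · rwa [sub_eq_zero.1 hzero]
  · by_contra hxM
    have hne : x - m ≠ 0 := fun h => hxM (sub_eq_zero.1 h ▸ hm)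
    exact (hmin _ (I.sub_mem hx (hMI m hm)) hne).not_gt hlt

theorem exists_monicS_forall_mem_lDvd_rDvd (hs : Function.Surjective σ)
    (I : TwoSidedIdeal (SkewPolyRing σ)) (hI : ∃ x ∈ I, x ≠ 0) :
    ∃ C, MonicS σ C ∧ C ∈ I ∧ ∀ x ∈ I, LDvd σ C x ∧ RDvd σ C x := by
  classical
  have hdeg : ∃ d, ∃ x ∈ I, x ≠ 0 ∧ natDegS σ x = d :=
    let ⟨x, hx, hx0⟩ := hI; ⟨_, x, hx, hx0, rfl⟩
  obtain ⟨C₀, hC₀I, hC₀, hC₀d⟩ := Nat.find_spec hdeg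
  have hmin : ∀ x ∈ I, x ≠ 0 → Nat.find hdeg ≤ natDegS σ x :=
    fun x hx hx0 => Nat.find_min' hdeg ⟨x, hx, hx0, rfl⟩
  set C := Cel σ (coeffS σ C₀ (natDegS σ C₀))⁻¹ * C₀
  have hCm : MonicS σ C := monicS_Cel_inv_mul hC₀
  have hCI : C ∈ I := I.mul_mem_left _ _ hC₀I
  have hCd : natDegS σ C = Nat.find hdeg := by
    rw [natDegS_Cel_mul (inv_ne_zero (coeffS_natDegS_ne_zero hC₀)), hC₀d]
  refine ⟨C, hCm, hCI, fun x hx => ⟨?_, ?_⟩⟩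
  · obtain ⟨q, hq⟩ := mem_of_forall_le_natDegS I hmin (AddMonoidHom.mulLeft C).range
      (by rintro _ ⟨q, rfl⟩; exact I.mul_mem_right _ _ hCI)
      (fun f hf =>
        let ⟨q, hq⟩ := exists_coeffS_sub_monicS_mul_eq_zero hs hCm (hCd ▸ hf)
        ⟨_, ⟨q, rfl⟩, hq⟩) hx
    exact ⟨q, hq.symm⟩
  · obtain ⟨q, hq⟩ := mem_of_forall_le_natDegS I hmin (AddMonoidHom.mulRight C).range
      (by rintro _ ⟨q, rfl⟩; exact I.mul_mem_left _ _ hCI)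
      (fun f hf =>
        let ⟨q, hq⟩ := exists_coeffS_sub_mul_monicS_eq_zero hCm (hCd ▸ hf)
        ⟨_, ⟨q, rfl⟩, hq⟩) hx
    exact ⟨q, hq.symm⟩

theorem RDvd.trans {a b c : SkewPolyRing σ} (hab : RDvd σ a b) (hbc : RDvd σ b c) :
    RDvd σ a c := by
  obtain ⟨u, rfl⟩ := hab
  obtain ⟨v, rfl⟩ := hbc
  exact ⟨v * u, mul_assoc v u a⟩

theorem RDvd.mul_left {a b : SkewPolyRing σ} (h : RDvd σ a b) (c : SkewPolyRing σ) :
    RDvd σ a (c * b) :=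
  RDvd.trans h ⟨c, rfl⟩

theorem rDvd_of_mem_span {d : SkewPolyRing σ} {S : Set (SkewPolyRing σ)}
    (hS : ∀ y ∈ S, ∀ r, RDvd σ d (y * r)) {x : SkewPolyRing σ}
    (hx : x ∈ TwoSidedIdeal.span S) : RDvd σ d x := by
  suffices ∀ r, RDvd σ d (x * r) by simpa using this 1
  induction hx using TwoSidedIdeal.span_induction with
  | mem y hy => exact hS y hy
  | zero => exact fun r => ⟨0, by rw [zero_mul, zero_mul]⟩
  | add x y _ _ hx hy =>
    intro r
    obtain ⟨u, hu⟩ := hx r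
    obtain ⟨v, hv⟩ := hy r
    exact ⟨u + v, by rw [add_mul, hu, hv, add_mul]⟩
  | neg x _ hx =>
    intro r
    obtain ⟨u, hu⟩ := hx r
    exact ⟨-u, by rw [neg_mul, hu, neg_mul]⟩
  | left_absorb a x _ hx => exact fun r => mul_assoc a x r ▸ RDvd.mul_left (hx r) a
  | right_absorb b x _ hx => exact fun r => (mul_assoc x b r).symm ▸ hx (b * r)

theorem totalDvd_of_lDvd_of_rDvd {a b c : SkewPolyRing σ} (hl : LDvd σ a b) (hr : RDvd σ a b)
    (hbc : TotalDvd σ b c) : TotalDvd σ a c := by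
  obtain ⟨v, rfl⟩ := hl
  obtain ⟨w, hw⟩ := hr
  intro u
  obtain ⟨⟨x, hx⟩, ⟨y, hy⟩⟩ := hbc u
  exact ⟨⟨v * x, by rw [hx, mul_assoc]⟩, ⟨y * w, by rw [hy, hw, mul_assoc]⟩⟩

theorem totalDvd_of_rDvd_of_totalDvd_self {c x : SkewPolyRing σ} (hc : TotalDvd σ c c)
    (h : RDvd σ c x) : TotalDvd σ c x := by
  obtain ⟨f, rfl⟩ := h
  intro u
  obtain ⟨v, hv⟩ := (hc (u * f)).1
  obtain ⟨w, hw⟩ := (hc u).2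
  exact ⟨⟨v, by rw [← mul_assoc, hv]⟩, ⟨f * w, by rw [mul_assoc, hw, mul_assoc]⟩⟩

theorem lDvd_of_rDvd_of_totalDvd_self {c d : SkewPolyRing σ} (hc : TotalDvd σ c c)
    (hc0 : c ≠ 0) (h : RDvd σ d c) : LDvd σ d c := by
  obtain ⟨g, hg⟩ := h
  have hg0 : g ≠ 0 := by rintro rfl; exact hc0 (by rw [hg, zero_mul])
  obtain ⟨v, hv⟩ := (hc g).1
  refine ⟨v, mul_left_cancel₀ hg0 ?_⟩
  rw [hv, ← mul_assoc, ← hg]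

end SkewPolyRing

theorem pow_apply_eq_self_of_dvd [Fintype K] {q a n : ℕ} (hK : Fintype.card K = q ^ a)
    (han : a ∣ n) {σ : K →+* K} (hσ : ∀ x, σ x = x ^ q) (x : K) : (σ ^ n) x = x := by
  obtain ⟨m, rfl⟩ := han
  rw [RingHom.coe_pow, show ⇑σ = (· ^ q) from funext hσ, pow_iterate, pow_mul, ← hK]
  exact FiniteField.pow_card_pow m x

theorem stmt13_general {K : Type*} [Field K] [Fintype K]
    (q a n : ℕ) (hK : Fintype.card K = q ^ a) (han : a ∣ n)
    (σ : K →+* K) (hσ : ∀ x : K, σ x = x ^ q)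
    (s t gs gt : SkewPolyRing σ) (h : TotalDvd σ s t)
    (hgs : IsGcrd σ gs s (Xel σ ^ n - 1)) (hgt : IsGcrd σ gt t (Xel σ ^ n - 1)) :
    TotalDvd σ gs gt := by
  open SkewPolyRing TwoSidedIdeal in
  set N := Xel σ ^ n - 1
  have hN : ∀ r, N * r = r * N := fun r => by
    rw [sub_mul, mul_sub, one_mul, mul_one,
      Xel_pow_mul_comm (pow_apply_eq_self_of_dvd hK han hσ)]
  set I := span {t, N}
  have htI : t ∈ I := subset_span (Set.mem_insert t _)
  have hNI : N ∈ I := subset_span (Set.mem_insert_of_mem t rfl)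
  have hI : ∃ x ∈ I, x ≠ 0 := by
    by_contra! hzero
    obtain ⟨u, hu⟩ := hgt.2.2.2 0 ⟨0, by rw [hzero t htI, mul_zero]⟩
      ⟨0, by rw [hzero N hNI, mul_zero]⟩
    exact hgt.1.ne_zero (by rw [hu, mul_zero])
  obtain ⟨C, hCm, hCI, hC⟩ :=
    exists_monicS_forall_mem_lDvd_rDvd (Finite.surjective_of_injective σ.injective) I hI
  have hCC : TotalDvd σ C C := fun u =>
    ⟨(hC _ (I.mul_mem_left u C hCI)).1, (hC _ (I.mul_mem_right C u hCI)).2⟩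
  -- `t r ∈ R s` because `s ∣∣ t`, and `N r = r N`.
  have hgsC : RDvd σ gs C := rDvd_of_mem_span (by
    rintro y (rfl | rfl) r
    exacts [hgs.2.1.trans (h r).2, hN r ▸ hgs.2.2.1.mul_left r]) hCI
  have hCgt : RDvd σ C gt := hgt.2.2.2 C (hC t htI).2 (hC N hNI).2
  exact totalDvd_of_lDvd_of_rDvd (lDvd_of_rDvd_of_totalDvd_self hCC hCm.ne_zero hgsC) hgsC
    (totalDvd_of_rDvd_of_totalDvd_self hCC hCgt)

/-- In `R = K[X;σ]` (`K = F_{q^a}`, `σ` the `q`-Frobenius) with `a ∣ n`: if `s` is a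
total divisor of `t`, then `gcrd(s, X^n - 1)` is a total divisor of
`gcrd(t, X^n - 1)`. -/
theorem stmt13 {K : Type*} [Field K] [Fintype K]
    (q a n : ℕ) (hq : IsPrimePow q) (hK : Fintype.card K = q ^ a) (han : a ∣ n)
    (σ : K →+* K) (hσ : ∀ x : K, σ x = x ^ q)
    (s t gs gt : SkewPolyRing σ) (h : TotalDvd σ s t)
    (hgs : IsGcrd σ gs s (Xel σ ^ n - 1)) (hgt : IsGcrd σ gt t (Xel σ ^ n - 1)) :
    TotalDvd σ gs gt :=
  stmt13_general q a n hK han σ hσ s t gs gt h hgs hgt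

end
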